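/- Birthday multiplication theorem: define f : ℕ → ℕ → ℕ by f(0, m) = 0, f(n, 0) = 0, and f(n+1, m+1) = f(n+1, m) + f(n, m+1) + f(n, m) + 1. Then for all finite-born numeric pregames x and y with birthdays g(x) = n and g(y) = m, the birthday of their product is g(x·y) = f(n, m). -/

import Mathlib

/-!
A birthday only sees the options of a game, not their sides, and the options of `x * y` are the
games `x' * y + x * y' - x' * y'` with `x'` an option of `x` and `y'` one of `y`. For finite
birthdays, `+` adds birthdays and negation preserves them, so by induction such an option has
birthday `f(k, m) + f(n, l) + f(k, l)`, where `k < n` and `l < m` are the birthdays of `x'`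
and `y'`. By monotonicity of `f` this is at most `f(n - 1, m) + f(n, m - 1) + f(n - 1, m - 1)`,
which is attained since a game born on day `n` has an option born on day `n - 1`.
-/

universe u

namespace SetTheory

-- Combinatorial game theory was removed from Mathlib; the December 2024 definitions are restated here.
inductive PGame : Type (u + 1)
  | mk : ∀ α β : Type u, (α → PGame) → (β → PGame) → PGame

namespace PGame

noncomputable def leLf (x : PGame.{u}) : PGame.{u} → Prop × Prop :=
  PGame.rec (motive := fun _ => PGame.{u} → Prop × Prop)
    (fun _ _ _ _ IHl IHr y =>
      PGame.rec (motive := fun _ => Prop × Prop)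
        (fun yl yr yL yR jl jr =>
          ((∀ i, (IHl i (mk yl yr yL yR)).2) ∧ ∀ j, (jr j).2,
            (∃ i, (jl i).1) ∨ ∃ j, (IHr j (mk yl yr yL yR)).1)) y) x

instance : LE PGame.{u} :=
  ⟨fun x y => (leLf x y).1⟩

instance : LT PGame.{u} :=
  ⟨fun x y => x ≤ y ∧ ¬y ≤ x⟩

def Numeric : PGame.{u} → Prop
  | ⟨_, _, L, R⟩ => (∀ i j, L i < R j) ∧ (∀ i, Numeric (L i)) ∧ ∀ j, Numeric (R j)

def neg : PGame.{u} → PGame.{u}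
  | ⟨l, r, L, R⟩ => ⟨r, l, fun i => neg (R i), fun i => neg (L i)⟩

instance : Neg PGame.{u} :=
  ⟨neg⟩

noncomputable def add (x : PGame.{u}) : PGame.{u} → PGame.{u} :=
  PGame.rec (motive := fun _ => PGame.{u} → PGame.{u})
    (fun xl xr _ _ IHxl IHxr y =>
      PGame.rec (motive := fun _ => PGame.{u})
        (fun yl yr yL yR IHyl IHyr =>
          mk (xl ⊕ yl) (xr ⊕ yr) (Sum.elim (fun i => IHxl i (mk yl yr yL yR)) IHyl)
            (Sum.elim (fun i => IHxr i (mk yl yr yL yR)) IHyr)) y) x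

noncomputable instance : Add PGame.{u} :=
  ⟨add⟩

noncomputable instance : Sub PGame.{u} :=
  ⟨fun x y => x + -y⟩

noncomputable def mul (x : PGame.{u}) : PGame.{u} → PGame.{u} :=
  PGame.rec (motive := fun _ => PGame.{u} → PGame.{u})
    (fun xl xr _ _ IHxl IHxr y =>
      PGame.rec (motive := fun _ => PGame.{u})
        (fun yl yr yL yR IHyl IHyr =>
          mk ((xl × yl) ⊕ (xr × yr)) ((xl × yr) ⊕ (xr × yl))
            (Sum.elim
              (fun p => IHxl p.1 (mk yl yr yL yR) + IHyl p.2 - IHxl p.1 (yL p.2))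
              (fun p => IHxr p.1 (mk yl yr yL yR) + IHyr p.2 - IHxr p.1 (yR p.2)))
            (Sum.elim
              (fun p => IHxl p.1 (mk yl yr yL yR) + IHyr p.2 - IHxl p.1 (yR p.2))
              (fun p => IHxr p.1 (mk yl yr yL yR) + IHyl p.2 - IHxr p.1 (yL p.2)))) y) x

noncomputable instance : Mul PGame.{u} :=
  ⟨mul⟩

noncomputable def birthday : PGame.{u} → Ordinal.{u}
  | ⟨_, _, xL, xR⟩ =>
    max (Ordinal.lsub.{u, u} fun i => birthday (xL i)) (Ordinal.lsub.{u, u} fun i => birthday (xR i))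

end PGame

end SetTheory

open SetTheory PGame Ordinal

/-- The recurrence governing birthdays of surreal products. -/
def birthdayMulFun : ℕ → ℕ → ℕ
  | 0, _ => 0
  | _ + 1, 0 => 0
  | n + 1, m + 1 =>
      birthdayMulFun (n + 1) m + birthdayMulFun n (m + 1) + birthdayMulFun n m + 1

theorem birthdayMulFun_zero_left (m : ℕ) : birthdayMulFun 0 m = 0 := by
  rw [birthdayMulFun]

theorem birthdayMulFun_zero_right : ∀ n, birthdayMulFun n 0 = 0
  | 0 | _ + 1 => by rw [birthdayMulFun]

theorem birthdayMulFun_succ_succ (n m : ℕ) : birthdayMulFun (n + 1) (m + 1) =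
    birthdayMulFun (n + 1) m + birthdayMulFun n (m + 1) + birthdayMulFun n m + 1 := by
  rw [birthdayMulFun]

theorem birthdayMulFun_le_succ_left : ∀ n m, birthdayMulFun n m ≤ birthdayMulFun (n + 1) m
  | 0, _ => by rw [birthdayMulFun_zero_left]; exact Nat.zero_le _
  | _ + 1, 0 => by rw [birthdayMulFun_zero_right, birthdayMulFun_zero_right]
  | n + 1, m + 1 => by rw [birthdayMulFun_succ_succ (n + 1) m]; omega

theorem birthdayMulFun_le_succ_right : ∀ n m, birthdayMulFun n m ≤ birthdayMulFun n (m + 1)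
  | 0, _ => by rw [birthdayMulFun_zero_left, birthdayMulFun_zero_left]
  | _ + 1, 0 => by rw [birthdayMulFun_zero_right]; exact Nat.zero_le _
  | n + 1, m + 1 => by rw [birthdayMulFun_succ_succ n (m + 1)]; omega

theorem birthdayMulFun_mono {n n' m m' : ℕ} (hn : n ≤ n') (hm : m ≤ m') :
    birthdayMulFun n m ≤ birthdayMulFun n' m' :=
  (monotone_nat_of_le_succ (birthdayMulFun_le_succ_left · m) hn).trans
    (monotone_nat_of_le_succ (birthdayMulFun_le_succ_right n') hm)

theorem birthdayMulFun_add_lt {n m k l : ℕ} (hk : k ≤ n) (hl : l ≤ m) :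
    birthdayMulFun k (m + 1) + birthdayMulFun (n + 1) l + birthdayMulFun k l <
      birthdayMulFun (n + 1) (m + 1) := by
  have hx := birthdayMulFun_mono hk (le_refl (m + 1))
  have hy := birthdayMulFun_mono (le_refl (n + 1)) hl
  have hxy := birthdayMulFun_mono hk hl
  rw [birthdayMulFun_succ_succ]
  omega

namespace SetTheory.PGame

def IsOption (y : PGame.{u}) : PGame.{u} → Prop
  | mk _ _ L R => (∃ i, L i = y) ∨ ∃ j, R j = y

theorem birthday_le_iff {x : PGame.{u}} {o : Ordinal.{u}} :
    x.birthday ≤ o ↔ ∀ y, IsOption y x → y.birthday < o := by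
  cases x
  refine (max_le_iff.trans
    (and_congr Ordinal.iSup_add_one_le_iff Ordinal.iSup_add_one_le_iff)).trans ?_
  simp only [IsOption, or_imp, forall_and, forall_exists_index, forall_apply_eq_imp_iff]

theorem lt_birthday_iff {x : PGame.{u}} {o : Ordinal.{u}} :
    o < x.birthday ↔ ∃ y, IsOption y x ∧ o ≤ y.birthday := by
  simp only [← not_le, birthday_le_iff, not_forall, not_not, exists_prop]

theorem birthday_lt_of_isOption {x y : PGame.{u}} (h : IsOption y x) :
    y.birthday < x.birthday :=
  birthday_le_iff.1 le_rfl y h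

theorem add_one_le_birthday_of_isOption {x y : PGame.{u}} (h : IsOption y x) :
    y.birthday + 1 ≤ x.birthday :=
  Order.add_one_le_of_lt (birthday_lt_of_isOption h)

theorem birthday_eq_zero_iff {x : PGame.{u}} : x.birthday = 0 ↔ ∀ y, ¬IsOption y x := by
  simp only [← nonpos_iff_eq_zero, birthday_le_iff, not_lt_zero, imp_false]

theorem exists_birthday_eq_natCast_of_isOption {x y : PGame.{u}} {n : ℕ}
    (hx : x.birthday = n) (h : IsOption y x) : ∃ k < n, y.birthday = k := by
  have hlt : y.birthday ∈ Set.Iio (n : Ordinal) := hx ▸ birthday_lt_of_isOption h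
  rw [← Ordinal.natCast_image_Iio] at hlt
  obtain ⟨k, hk, hyk⟩ := hlt
  exact ⟨k, hk, hyk.symm⟩

theorem exists_isOption_birthday_eq {x : PGame.{u}} {n : ℕ} (hx : x.birthday = ↑(n + 1)) :
    ∃ y, IsOption y x ∧ y.birthday = n := by
  have hlt : (n : Ordinal) < x.birthday := by rw [hx]; exact_mod_cast n.lt_succ_self
  obtain ⟨y, hy, hny⟩ := lt_birthday_iff.1 hlt
  refine ⟨y, hy, le_antisymm ?_ hny⟩
  obtain ⟨k, hk, hyk⟩ := exists_birthday_eq_natCast_of_isOption hx hy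
  rw [hyk]
  exact_mod_cast Nat.le_of_lt_succ hk

theorem birthday_neg : ∀ x : PGame.{u}, (-x).birthday = x.birthday
  | mk xl xr xL xR => by
    show birthday (mk xr xl (fun j => -xR j) fun i => -xL i) = birthday (mk xl xr xL xR)
    simp only [birthday, birthday_neg]
    exact max_comm _ _

theorem mk_add_mk (xl xr : Type u) (xL : xl → PGame.{u}) (xR : xr → PGame.{u})
    (yl yr : Type u) (yL : yl → PGame.{u}) (yR : yr → PGame.{u}) :
    mk xl xr xL xR + mk yl yr yL yR = mk (xl ⊕ yl) (xr ⊕ yr)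
      (Sum.elim (fun i => xL i + mk yl yr yL yR) (fun j => mk xl xr xL xR + yL j))
      (Sum.elim (fun i => xR i + mk yl yr yL yR) (fun j => mk xl xr xL xR + yR j)) := rfl

theorem isOption_add_iff {x y z : PGame.{u}} :
    IsOption z (x + y) ↔
      (∃ x', IsOption x' x ∧ z = x' + y) ∨ ∃ y', IsOption y' y ∧ z = x + y' := by
  cases x; cases y
  simp only [IsOption, mk_add_mk, Sum.exists, Sum.elim_inl, Sum.elim_inr]
  grind

theorem birthday_add_natCast {x y : PGame.{u}} {p q : ℕ} (hx : x.birthday = p)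
    (hy : y.birthday = q) : (x + y).birthday = ↑(p + q) := by
  apply le_antisymm
  · rw [birthday_le_iff]
    intro z hz
    rcases isOption_add_iff.1 hz with ⟨x', hx', rfl⟩ | ⟨y', hy', rfl⟩
    · obtain ⟨k, hk, hxk⟩ := exists_birthday_eq_natCast_of_isOption hx hx'
      rw [birthday_add_natCast hxk hy]
      exact_mod_cast Nat.add_lt_add_right hk q
    · obtain ⟨k, hk, hyk⟩ := exists_birthday_eq_natCast_of_isOption hy hy'
      rw [birthday_add_natCast hx hyk]
      exact_mod_cast Nat.add_lt_add_left hk p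
  · match p, q, hx, hy with
    | 0, 0, _, _ => simp
    | 0, q + 1, hx, hy =>
      obtain ⟨y', hy', hyq⟩ := exists_isOption_birthday_eq hy
      calc ((0 + (q + 1) : ℕ) : Ordinal) = (x + y').birthday + 1 := by
            rw [birthday_add_natCast hx hyq]; norm_cast
        _ ≤ (x + y).birthday :=
            add_one_le_birthday_of_isOption (isOption_add_iff.2 (.inr ⟨y', hy', rfl⟩))
    | p + 1, q, hx, hy =>
      obtain ⟨x', hx', hxp⟩ := exists_isOption_birthday_eq hx
      calc ((p + 1 + q : ℕ) : Ordinal) = (x' + y).birthday + 1 := by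
            rw [birthday_add_natCast hxp hy, Nat.add_right_comm]; norm_cast
        _ ≤ (x + y).birthday :=
            add_one_le_birthday_of_isOption (isOption_add_iff.2 (.inl ⟨x', hx', rfl⟩))
termination_by p + q

noncomputable def mulOption (x y x' y' : PGame.{u}) : PGame.{u} :=
  x' * y + x * y' - x' * y'

theorem mk_mul_mk (xl xr : Type u) (xL : xl → PGame.{u}) (xR : xr → PGame.{u})
    (yl yr : Type u) (yL : yl → PGame.{u}) (yR : yr → PGame.{u}) :
    mk xl xr xL xR * mk yl yr yL yR =
      mk ((xl × yl) ⊕ (xr × yr)) ((xl × yr) ⊕ (xr × yl))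
        (Sum.elim (fun p => mulOption (mk xl xr xL xR) (mk yl yr yL yR) (xL p.1) (yL p.2))
          (fun p => mulOption (mk xl xr xL xR) (mk yl yr yL yR) (xR p.1) (yR p.2)))
        (Sum.elim (fun p => mulOption (mk xl xr xL xR) (mk yl yr yL yR) (xL p.1) (yR p.2))
          (fun p => mulOption (mk xl xr xL xR) (mk yl yr yL yR) (xR p.1) (yL p.2))) := rfl

theorem isOption_mul_iff {x y z : PGame.{u}} :
    IsOption z (x * y) ↔ ∃ x' y', IsOption x' x ∧ IsOption y' y ∧ z = mulOption x y x' y' := by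
  cases x; cases y
  rw [mk_mul_mk]
  constructor
  · rintro (⟨⟨i, j⟩ | ⟨i, j⟩, rfl⟩ | ⟨⟨i, j⟩ | ⟨i, j⟩, rfl⟩)
    exacts [⟨_, _, .inl ⟨i, rfl⟩, .inl ⟨j, rfl⟩, rfl⟩, ⟨_, _, .inr ⟨i, rfl⟩, .inr ⟨j, rfl⟩, rfl⟩,
      ⟨_, _, .inl ⟨i, rfl⟩, .inr ⟨j, rfl⟩, rfl⟩, ⟨_, _, .inr ⟨i, rfl⟩, .inl ⟨j, rfl⟩, rfl⟩]
  · rintro ⟨x', y', ⟨i, rfl⟩ | ⟨i, rfl⟩, ⟨j, rfl⟩ | ⟨j, rfl⟩, rfl⟩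
    exacts [.inl ⟨.inl (i, j), rfl⟩, .inr ⟨.inl (i, j), rfl⟩, .inr ⟨.inr (i, j), rfl⟩,
      .inl ⟨.inr (i, j), rfl⟩]

theorem birthday_mulOption_natCast {x y x' y' : PGame.{u}} {a b c : ℕ}
    (ha : (x' * y).birthday = a) (hb : (x * y').birthday = b) (hc : (x' * y').birthday = c) :
    (mulOption x y x' y').birthday = ↑(a + b + c) :=
  birthday_add_natCast (birthday_add_natCast ha hb) ((birthday_neg _).trans hc)

theorem birthday_mul_eq_zero {x y : PGame.{u}} (h : x.birthday = 0 ∨ y.birthday = 0) :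
    (x * y).birthday = 0 := by
  simp only [birthday_eq_zero_iff] at h ⊢
  intro z hz
  obtain ⟨x', y', hx', hy', -⟩ := isOption_mul_iff.1 hz
  exact h.elim (· x' hx') (· y' hy')

end SetTheory.PGame

theorem birthday_mul (x y : PGame) (n m : ℕ) (hxn : x.birthday = (n : Ordinal))
    (hym : y.birthday = (m : Ordinal)) :
    (x * y).birthday = (birthdayMulFun n m : Ordinal) := by
  match n, m, hxn, hym with
  | 0, _, hxn, _ => rw [birthday_mul_eq_zero (.inl hxn), birthdayMulFun_zero_left, Nat.cast_zero]
  | _ + 1, 0, _, hym =>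
    rw [birthday_mul_eq_zero (.inr hym), birthdayMulFun_zero_right, Nat.cast_zero]
  | n + 1, m + 1, hxn, hym =>
    apply le_antisymm
    · rw [birthday_le_iff]
      intro z hz
      obtain ⟨x', y', hx', hy', rfl⟩ := isOption_mul_iff.1 hz
      obtain ⟨k, hk, hxk⟩ := exists_birthday_eq_natCast_of_isOption hxn hx'
      obtain ⟨l, hl, hyl⟩ := exists_birthday_eq_natCast_of_isOption hym hy'
      rw [birthday_mulOption_natCast (birthday_mul x' y k (m + 1) hxk hym)
        (birthday_mul x y' (n + 1) l hxn hyl) (birthday_mul x' y' k l hxk hyl)]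
      exact_mod_cast birthdayMulFun_add_lt (Nat.le_of_lt_succ hk) (Nat.le_of_lt_succ hl)
    · obtain ⟨x', hx', hxn'⟩ := exists_isOption_birthday_eq hxn
      obtain ⟨y', hy', hym'⟩ := exists_isOption_birthday_eq hym
      calc (birthdayMulFun (n + 1) (m + 1) : Ordinal) = (mulOption x y x' y').birthday + 1 := by
            rw [birthday_mulOption_natCast (birthday_mul x' y n (m + 1) hxn' hym)
              (birthday_mul x y' (n + 1) m hxn hym') (birthday_mul x' y' n m hxn' hym'),
              birthdayMulFun_succ_succ, Nat.add_comm (birthdayMulFun (n + 1) m)]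
            norm_cast
        _ ≤ (x * y).birthday :=
            add_one_le_birthday_of_isOption (isOption_mul_iff.2 ⟨x', y', hx', hy', rfl⟩)
termination_by n + m
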